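/- arXiv:1908.01850 — 4 statements merged into one kernel-verified Lean document; each statement's English description precedes it below -/
import Mathlib

section
/- Let H be a complex Hilbert space and let V = [[a, B],[C, D]] be an isometric colligation on ℂ ⊕ H. Then for every z in the open unit disc 𝔻 the operator I − zD is invertible, the transfer function τ_V(z) = a + zB(I − zD)^{-1}C is analytic on 𝔻, and |τ_V(z)| ≤ 1 for all z ∈ 𝔻; that is, τ_V belongs to the Schur class S(𝔻). -/
open ContinuousLinearMap Metric

noncomputable section

/-- One-variable Schur class: analytic on the open unit disc, bounded by one. -/
def SchurClass (f : ℂ → ℂ) : Prop :=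
  AnalyticOnNhd ℂ f (ball 0 1) ∧ ∀ z ∈ ball (0 : ℂ) 1, ‖f z‖ ≤ 1

/-- The open unit bidisc as a subset of `ℂ × ℂ`. -/
def biDisc : Set (ℂ × ℂ) := (ball 0 1) ×ˢ (ball 0 1)

/-- Two-variable Schur class. -/
def SchurClass2 (f : ℂ × ℂ → ℂ) : Prop :=
  AnalyticOnNhd ℂ f biDisc ∧ ∀ z ∈ biDisc, ‖f z‖ ≤ 1

/-- The open unit polydisc in `ℂⁿ`. -/
def polyDisc (n : ℕ) : Set (Fin n → ℂ) := {z | ∀ i, ‖z i‖ < 1}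

variable {H : Type*} [NormedAddCommGroup H] [InnerProductSpace ℂ H]

/-- `V = [[a, B], [C, D]]` on `ℂ ⊕ H` is an isometric colligation, i.e. `V*V = I`,
expressed as preservation of inner products in the Hilbertian direct sum `ℂ ⊕ H`. -/
def IsIsometricColligation (a : ℂ) (B : H →L[ℂ] ℂ) (C : ℂ →L[ℂ] H) (D : H →L[ℂ] H) : Prop :=
  ∀ (z w : ℂ) (h k : H),
    (starRingEnd ℂ) (a * z + B h) * (a * w + B k) + (inner ℂ (C z + D h) (C w + D k) : ℂ) =
      (starRingEnd ℂ) z * w + (inner ℂ h k : ℂ)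

/-- One-variable transfer function `τ_V(z) = a + z B (I - z D)⁻¹ C`. -/
def transfer1 (a : ℂ) (B : H →L[ℂ] ℂ) (C : ℂ →L[ℂ] H) (D : H →L[ℂ] H) (z : ℂ) : ℂ :=
  a + z * B (Ring.inverse (1 - z • D) (C 1))

section Pair

variable {H₁ H₂ K₁ K₂ : Type*}
  [NormedAddCommGroup H₁] [InnerProductSpace ℂ H₁]
  [NormedAddCommGroup H₂] [InnerProductSpace ℂ H₂]
  [NormedAddCommGroup K₁] [InnerProductSpace ℂ K₁]
  [NormedAddCommGroup K₂] [InnerProductSpace ℂ K₂]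

/-- Row operator `[B₁, B₂] : H₁ ⊕ H₂ → ℂ`. -/
def rowB (B₁ : H₁ →L[ℂ] ℂ) (B₂ : H₂ →L[ℂ] ℂ) : WithLp 2 (H₁ × H₂) →L[ℂ] ℂ :=
  (B₁.comp (fst ℂ H₁ H₂) + B₂.comp (snd ℂ H₁ H₂)).comp
    (WithLp.prodContinuousLinearEquiv 2 ℂ H₁ H₂).toContinuousLinearMap

/-- Column operator `[C₁; C₂] : ℂ → H₁ ⊕ H₂`. -/
def colC (C₁ : ℂ →L[ℂ] H₁) (C₂ : ℂ →L[ℂ] H₂) : ℂ →L[ℂ] WithLp 2 (H₁ × H₂) :=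
  ((WithLp.prodContinuousLinearEquiv 2 ℂ H₁ H₂).symm.toContinuousLinearMap).comp (C₁.prod C₂)

/-- Block operator `[[D₁₁, D₁₂], [D₂₁, D₂₂]] : K₁ ⊕ K₂ → H₁ ⊕ H₂`. -/
def blockD (D₁₁ : K₁ →L[ℂ] H₁) (D₁₂ : K₂ →L[ℂ] H₁) (D₂₁ : K₁ →L[ℂ] H₂) (D₂₂ : K₂ →L[ℂ] H₂) :
    WithLp 2 (K₁ × K₂) →L[ℂ] WithLp 2 (H₁ × H₂) :=
  ((WithLp.prodContinuousLinearEquiv 2 ℂ H₁ H₂).symm.toContinuousLinearMap).comp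
    ((((D₁₁.comp (fst ℂ K₁ K₂) + D₁₂.comp (snd ℂ K₁ K₂))).prod
        (D₂₁.comp (fst ℂ K₁ K₂) + D₂₂.comp (snd ℂ K₁ K₂))).comp
      (WithLp.prodContinuousLinearEquiv 2 ℂ K₁ K₂).toContinuousLinearMap)

/-- The diagonal operator `E(z) = z₁ I_{H₁} ⊕ z₂ I_{H₂}` on `H₁ ⊕ H₂`. -/
def diag2 (z : ℂ × ℂ) : WithLp 2 (H₁ × H₂) →L[ℂ] WithLp 2 (H₁ × H₂) :=
  blockD (z.1 • ContinuousLinearMap.id ℂ H₁) 0 0 (z.2 • ContinuousLinearMap.id ℂ H₂)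

/-- Two-variable transfer function `τ_V(z) = a + B (I - E(z) D)⁻¹ E(z) C` on `ℂ ⊕ (H₁ ⊕ H₂)`. -/
def transfer2 (a : ℂ) (B : WithLp 2 (H₁ × H₂) →L[ℂ] ℂ) (C : ℂ →L[ℂ] WithLp 2 (H₁ × H₂))
    (D : WithLp 2 (H₁ × H₂) →L[ℂ] WithLp 2 (H₁ × H₂)) (z : ℂ × ℂ) : ℂ :=
  a + B (Ring.inverse (1 - (diag2 z).comp D) (diag2 z (C 1)))

end Pair

section Fam

variable {n m k : ℕ} {K : Fin n → Type*} {M : Fin m → Type*} {N : Fin k → Type*}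
  [∀ i, NormedAddCommGroup (K i)] [∀ i, InnerProductSpace ℂ (K i)]
  [∀ i, NormedAddCommGroup (M i)] [∀ i, InnerProductSpace ℂ (M i)]
  [∀ i, NormedAddCommGroup (N i)] [∀ i, InnerProductSpace ℂ (N i)]

/-- Row operator `[B₁, …, Bₙ] : ⊕ᵢ Kᵢ → ℂ`. -/
def rowN (B : ∀ i, K i →L[ℂ] ℂ) : PiLp 2 K →L[ℂ] ℂ :=
  ∑ i, (B i).comp ((ContinuousLinearMap.proj i).comp
    (PiLp.continuousLinearEquiv 2 ℂ K).toContinuousLinearMap)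

/-- Column operator `[C₁; …; Cₙ] : ℂ → ⊕ᵢ Kᵢ`. -/
def colN (C : ∀ i, ℂ →L[ℂ] K i) : ℂ →L[ℂ] PiLp 2 K :=
  ((PiLp.continuousLinearEquiv 2 ℂ K).symm.toContinuousLinearMap).comp
    (ContinuousLinearMap.pi C)

/-- Rectangular block-matrix operator `[Dᵢⱼ] : ⊕ⱼ Nⱼ → ⊕ᵢ Mᵢ` (also used for square ones). -/
def matR (D : ∀ (i : Fin m) (j : Fin k), N j →L[ℂ] M i) : PiLp 2 N →L[ℂ] PiLp 2 M :=
  ((PiLp.continuousLinearEquiv 2 ℂ M).symm.toContinuousLinearMap).comp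
    ((ContinuousLinearMap.pi fun i => ∑ j, (D i j).comp (ContinuousLinearMap.proj j)).comp
      (PiLp.continuousLinearEquiv 2 ℂ N).toContinuousLinearMap)

/-- The diagonal operator `E(z) = z₁ I_{K₁} ⊕ ⋯ ⊕ zₙ I_{Kₙ}` on `⊕ᵢ Kᵢ`. -/
def diagN (z : Fin n → ℂ) : PiLp 2 K →L[ℂ] PiLp 2 K :=
  ((PiLp.continuousLinearEquiv 2 ℂ K).symm.toContinuousLinearMap).comp
    ((ContinuousLinearMap.pi fun i => z i • ContinuousLinearMap.proj i).comp
      (PiLp.continuousLinearEquiv 2 ℂ K).toContinuousLinearMap)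

/-- `n`-variable transfer function `τ_V(z) = a + B (I - E(z) D)⁻¹ E(z) C` on `ℂ ⊕ (⊕ᵢ Kᵢ)`. -/
def transferN (a : ℂ) (B : PiLp 2 K →L[ℂ] ℂ) (C : ℂ →L[ℂ] PiLp 2 K)
    (D : PiLp 2 K →L[ℂ] PiLp 2 K) (z : Fin n → ℂ) : ℂ :=
  a + B (Ring.inverse (1 - (diagN z).comp D) (diagN z (C 1)))

/-- Transfer function of a colligation on `ℂ ⊕ ((⊕ᵢ₌₁ᵐ Mᵢ) ⊕ (⊕ⱼ₌₁ᵏ Nⱼ))` in the `m + k`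
variables `(z₁, z₂) ∈ 𝔻^m × 𝔻^k`, where `E(z₁, z₂) = (⊕ᵢ z₁ᵢ I_{Mᵢ}) ⊕ (⊕ⱼ z₂ⱼ I_{Nⱼ})`. -/
def transferSplit (a : ℂ) (B : WithLp 2 (PiLp 2 M × PiLp 2 N) →L[ℂ] ℂ)
    (C : ℂ →L[ℂ] WithLp 2 (PiLp 2 M × PiLp 2 N))
    (D : WithLp 2 (PiLp 2 M × PiLp 2 N) →L[ℂ] WithLp 2 (PiLp 2 M × PiLp 2 N))
    (z₁ : Fin m → ℂ) (z₂ : Fin k → ℂ) : ℂ :=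
  a + B (Ring.inverse (1 - (blockD (diagN z₁) 0 0 (diagN z₂)).comp D)
    (blockD (diagN z₁) 0 0 (diagN z₂) (C 1)))

end Fam

/-- If `V = [[a,B],[C,D]]` is an isometric colligation on `ℂ ⊕ H`, then for
every `z ∈ 𝔻` the operator `I - zD` is invertible, the transfer function
`τ_V(z) = a + zB(I - zD)⁻¹C` is analytic on `𝔻`, and `|τ_V(z)| ≤ 1` on `𝔻`;
that is, `τ_V` belongs to the Schur class `S(𝔻)`. -/
theorem transfer_mem_schurClass_of_isometric_colligation
    {H : Type*} [NormedAddCommGroup H] [InnerProductSpace ℂ H] [CompleteSpace H]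
    (a : ℂ) (B : H →L[ℂ] ℂ) (C : ℂ →L[ℂ] H) (D : H →L[ℂ] H)
    (hV : IsIsometricColligation a B C D) :
    (∀ z ∈ ball (0 : ℂ) 1, IsUnit (1 - z • D)) ∧
      AnalyticOnNhd ℂ (transfer1 a B C D) (ball 0 1) ∧
      ∀ z ∈ ball (0 : ℂ) 1, ‖transfer1 a B C D z‖ ≤ 1 := by
  -- ‖D‖ ≤ 1
  have hDle : ∀ h : H, ‖D h‖ ≤ ‖h‖ := by
    intro h
    have := hV 0 0 h h
    simp only [mul_zero, zero_add, map_zero, RingHom.map_zero, zero_mul] at this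
    have h1 : (starRingEnd ℂ) (B h) * (B h) + (inner ℂ (D h) (D h) : ℂ) = (inner ℂ h h : ℂ) := this
    rw [RCLike.conj_mul, inner_self_eq_norm_sq_to_K, inner_self_eq_norm_sq_to_K] at h1
    have h2 : ‖B h‖ ^ 2 + ‖D h‖ ^ 2 = ‖h‖ ^ 2 := by exact_mod_cast h1
    nlinarith [norm_nonneg (B h), norm_nonneg (D h), norm_nonneg h]
  have hD : ‖D‖ ≤ 1 := ContinuousLinearMap.opNorm_le_bound D zero_le_one
    (by simpa using hDle)
  have hsmall : ∀ z ∈ ball (0 : ℂ) 1, ‖z • D‖ < 1 := by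
    intro z hz
    rw [mem_ball_zero_iff] at hz
    calc ‖z • D‖ = ‖z‖ * ‖D‖ := norm_smul z D
      _ ≤ ‖z‖ * 1 := by nlinarith [norm_nonneg z]
      _ < 1 := by simpa using hz
  have hunit : ∀ z ∈ ball (0 : ℂ) 1, IsUnit (1 - z • D) := fun z hz =>
    (Units.oneSub (z • D) (hsmall z hz)).isUnit
  refine ⟨hunit, ?_, ?_⟩
  · -- analyticity
    intro z hz
    have h1 : AnalyticAt ℂ (fun w : ℂ => (1 : H →L[ℂ] H) - w • D) z :=
      analyticAt_const.sub (analyticAt_id.smul analyticAt_const)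
    have h2 : AnalyticAt ℂ (Ring.inverse : (H →L[ℂ] H) → (H →L[ℂ] H)) (1 - z • D) :=
      analyticAt_inverse ((hunit z hz).unit)
    have h3 := AnalyticAt.comp (f := fun w : ℂ => (1 : H →L[ℂ] H) - w • D) h2 h1
    have h4 := ((ContinuousLinearMap.apply ℂ H (C 1)).analyticAt _).comp h3
    have h5 := (B.analyticAt _).comp h4
    show AnalyticAt ℂ
      (fun w : ℂ => a + w * B ((Ring.inverse (1 - w • D) : H →L[ℂ] H) (C 1))) z
    exact analyticAt_const.add (analyticAt_id.mul h5)
  · -- bound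
    intro z hz
    rw [mem_ball_zero_iff] at hz
    set g : H := (Ring.inverse (1 - z • D) : H →L[ℂ] H) (C 1) with hg
    have hginv : (1 - z • D) * Ring.inverse (1 - z • D) = 1 :=
      Ring.mul_inverse_cancel _ (hunit z (by simpa [mem_ball_zero_iff] using hz))
    have hgeq : g - z • D g = C 1 := by
      have := congrArg (fun T : H →L[ℂ] H => T (C 1)) hginv
      simpa [ContinuousLinearMap.mul_apply, ContinuousLinearMap.sub_apply,
        ContinuousLinearMap.smul_apply, hg] using this
    have hCD : C 1 + D (z • g) = g := by
      rw [map_smul]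
      rw [← hgeq]; abel
    have key := hV 1 1 (z • g) (z • g)
    rw [hCD] at key
    have hτ : a * 1 + B (z • g) = transfer1 a B C D z := by
      simp [transfer1, hg, map_smul, smul_eq_mul]
    rw [hτ] at key
    set τ := transfer1 a B C D z
    rw [RCLike.conj_mul, inner_self_eq_norm_sq_to_K, inner_self_eq_norm_sq_to_K,
      RCLike.conj_mul] at key
    have hreal : ‖τ‖ ^ 2 + ‖g‖ ^ 2 = ‖(1 : ℂ)‖ ^ 2 + ‖z • g‖ ^ 2 := by exact_mod_cast key
    rw [norm_one, norm_smul] at hreal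
    have hz2 : ‖z‖ ^ 2 < 1 := by nlinarith [norm_nonneg z]
    have hpos : (1 - ‖z‖ ^ 2) * ‖g‖ ^ 2 ≥ 0 :=
      mul_nonneg (by linarith) (sq_nonneg _)
    have hτ2 : ‖τ‖ ^ 2 ≤ 1 := by nlinarith
    nlinarith [norm_nonneg τ]
end
end

section
/- Let 1 ≤ m < n and let H₁, …, Hₙ be complex Hilbert spaces. Suppose V₁ = [[a₁, B₁],[C₁, D₁]] is an isometric colligation on ℂ ⊕ (H₁ ⊕ ⋯ ⊕ H_m) and V₂ = [[a₂, B₂],[C₂, D₂]] is an isometric colligation on ℂ ⊕ (H_{m+1} ⊕ ⋯ ⊕ Hₙ). Then the block operator V = [[a₁a₂, B₁, a₁B₂],[a₂C₁, D₁, C₁B₂],[C₂, 0, D₂]] on ℂ ⊕ ((H₁ ⊕ ⋯ ⊕ H_m) ⊕ (H_{m+1} ⊕ ⋯ ⊕ Hₙ)) is an isometry, it satisfies property F_m(n), and τ_V(z) = τ_{V₁}(z₁, …, z_m) · τ_{V₂}(z_{m+1}, …, zₙ) for all z = (z₁, …, zₙ) in the open unit polydisc 𝔻ⁿ. -/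
open ContinuousLinearMap Metric

noncomputable section

variable {H : Type*} [NormedAddCommGroup H] [InnerProductSpace ℂ H]

section Helpers

variable {X : Type*} [NormedAddCommGroup X] [InnerProductSpace ℂ X]

lemma myfst' {α β : Type*} [AddCommGroup α] [AddCommGroup β]
    (x y : WithLp 2 (α × β)) : (x + y).fst = x.fst + y.fst := rfl
lemma mysnd' {α β : Type*} [AddCommGroup α] [AddCommGroup β]
    (x y : WithLp 2 (α × β)) : (x + y).snd = x.snd + y.snd := rfl

/-- The `D`-block of an isometric colligation is a contraction. -/
lemma colligation_D_contraction {a : ℂ} {B : X →L[ℂ] ℂ} {C : ℂ →L[ℂ] X} {D : X →L[ℂ] X}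
    (hV : IsIsometricColligation a B C D) (h : X) : ‖D h‖ ≤ ‖h‖ := by
  have h1 := hV 0 0 h h
  simp only [mul_zero, zero_add, map_zero, RCLike.conj_mul,
    inner_self_eq_norm_sq_to_K] at h1
  have h3 : ‖B h‖ ^ 2 + ‖D h‖ ^ 2 = ‖h‖ ^ 2 := by exact_mod_cast h1
  have := norm_nonneg (B h)
  exact (abs_le_of_sq_le_sq' (by nlinarith) (norm_nonneg h)).2

/-- If `T w = v` and `T` is a unit, then `Ring.inverse T v = w`. -/
lemma ring_inverse_apply_eq [CompleteSpace X] {T : X →L[ℂ] X} (hT : IsUnit T)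
    {w v : X} (hw : T w = v) : Ring.inverse T v = w := by
  rw [← hw, ← ContinuousLinearMap.mul_apply, Ring.inverse_mul_cancel _ hT,
    ContinuousLinearMap.one_apply]

lemma isUnit_one_sub_comp [CompleteSpace X] {E D : X →L[ℂ] X} {c : ℝ}
    (hc : c < 1) (hc0 : 0 ≤ c) (hE : ∀ x, ‖E x‖ ≤ c * ‖x‖) (hD : ∀ x, ‖D x‖ ≤ ‖x‖) :
    IsUnit (1 - E.comp D) := by
  apply isUnit_one_sub_of_norm_lt_one
  refine lt_of_le_of_lt (ContinuousLinearMap.opNorm_le_bound _ hc0 fun x => ?_) hc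
  exact (hE (D x)).trans (mul_le_mul_of_nonneg_left (hD x) hc0)

end Helpers

section DiagHelpers

variable {n : ℕ} {K : Fin n → Type*}
  [∀ i, NormedAddCommGroup (K i)] [∀ i, InnerProductSpace ℂ (K i)]

lemma diagN_apply (z : Fin n → ℂ) (x : PiLp 2 K) (i : Fin n) :
    diagN z x i = z i • x i := rfl

lemma diagN_bound (z : Fin n → ℂ) {c : ℝ} (hc : ∀ i, ‖z i‖ ≤ c) (hc0 : 0 ≤ c)
    (x : PiLp 2 K) : ‖diagN z x‖ ≤ c * ‖x‖ := by
  have h2 : ‖diagN z x‖ ^ 2 ≤ (c * ‖x‖) ^ 2 := by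
    rw [PiLp.norm_sq_eq_of_L2, mul_pow, PiLp.norm_sq_eq_of_L2, Finset.mul_sum]
    refine Finset.sum_le_sum fun i _ => ?_
    rw [diagN_apply, norm_smul, mul_pow]
    gcongr
    exact hc i
  exact (abs_le_of_sq_le_sq' h2 (by positivity)).2

end DiagHelpers

section BlockHelpers

variable {X Y : Type*} [NormedAddCommGroup X] [InnerProductSpace ℂ X]
  [NormedAddCommGroup Y] [InnerProductSpace ℂ Y]

lemma blockDiag_fst (E₁ : X →L[ℂ] X) (E₂ : Y →L[ℂ] Y) (x : WithLp 2 (X × Y)) :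
    (blockD E₁ 0 0 E₂ x).fst = E₁ x.fst := by
  simp [blockD]

lemma blockDiag_snd (E₁ : X →L[ℂ] X) (E₂ : Y →L[ℂ] Y) (x : WithLp 2 (X × Y)) :
    (blockD E₁ 0 0 E₂ x).snd = E₂ x.snd := by
  simp [blockD]

lemma blockDiag_bound (E₁ : X →L[ℂ] X) (E₂ : Y →L[ℂ] Y) {c : ℝ} (hc0 : 0 ≤ c)
    (h₁ : ∀ v, ‖E₁ v‖ ≤ c * ‖v‖) (h₂ : ∀ v, ‖E₂ v‖ ≤ c * ‖v‖) (x : WithLp 2 (X × Y)) :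
    ‖blockD E₁ 0 0 E₂ x‖ ≤ c * ‖x‖ := by
  have h2 : ‖blockD E₁ 0 0 E₂ x‖ ^ 2 ≤ (c * ‖x‖) ^ 2 := by
    rw [WithLp.prod_norm_sq_eq_of_L2, mul_pow, WithLp.prod_norm_sq_eq_of_L2,
      blockDiag_fst, blockDiag_snd, mul_add]
    have b1 : ‖E₁ x.fst‖ ^ 2 ≤ c ^ 2 * ‖x.fst‖ ^ 2 := by
      rw [← mul_pow]; exact pow_le_pow_left₀ (norm_nonneg _) (h₁ x.fst) 2
    have b2 : ‖E₂ x.snd‖ ^ 2 ≤ c ^ 2 * ‖x.snd‖ ^ 2 := by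
      rw [← mul_pow]; exact pow_le_pow_left₀ (norm_nonneg _) (h₂ x.snd) 2
    linarith
  exact (abs_le_of_sq_le_sq' h2 (by positivity)).2

end BlockHelpers
section MoreHelpers

variable {X Y : Type*} [NormedAddCommGroup X] [InnerProductSpace ℂ X]
  [NormedAddCommGroup Y] [InnerProductSpace ℂ Y]

lemma rowB_apply (B₁ : X →L[ℂ] ℂ) (B₂ : Y →L[ℂ] ℂ) (x : WithLp 2 (X × Y)) :
    rowB B₁ B₂ x = B₁ x.fst + B₂ x.snd := by simp [rowB]

lemma colC_fst (C₁ : ℂ →L[ℂ] X) (C₂ : ℂ →L[ℂ] Y) (z : ℂ) :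
    (colC C₁ C₂ z).fst = C₁ z := by simp [colC]

lemma colC_snd (C₁ : ℂ →L[ℂ] X) (C₂ : ℂ →L[ℂ] Y) (z : ℂ) :
    (colC C₁ C₂ z).snd = C₂ z := by simp [colC]

variable {X' Y' : Type*} [NormedAddCommGroup X'] [InnerProductSpace ℂ X']
  [NormedAddCommGroup Y'] [InnerProductSpace ℂ Y']

lemma blockD_fst (D11 : X →L[ℂ] X') (D12 : Y →L[ℂ] X') (D21 : X →L[ℂ] Y')
    (D22 : Y →L[ℂ] Y') (x : WithLp 2 (X × Y)) :
    (blockD D11 D12 D21 D22 x).fst = D11 x.fst + D12 x.snd := by simp [blockD]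

lemma blockD_snd (D11 : X →L[ℂ] X') (D12 : Y →L[ℂ] X') (D21 : X →L[ℂ] Y')
    (D22 : Y →L[ℂ] Y') (x : WithLp 2 (X × Y)) :
    (blockD D11 D12 D21 D22 x).snd = D21 x.fst + D22 x.snd := by simp [blockD]

lemma wlp_ext {x y : WithLp 2 (X × Y)} (h1 : x.fst = y.fst) (h2 : x.snd = y.snd) : x = y :=
  WithLp.ofLp_injective 2 (Prod.ext h1 h2)

lemma wlp_sub_fst (x y : WithLp 2 (X × Y)) : (x - y).fst = x.fst - y.fst := rfl
lemma wlp_sub_snd (x y : WithLp 2 (X × Y)) : (x - y).snd = x.snd - y.snd := rfl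

end MoreHelpers

lemma exists_poly_bound {n : ℕ} (hn : 0 < n) (z : Fin n → ℂ) (hz : ∀ i, ‖z i‖ < 1) :
    ∃ c : ℝ, (∀ i, ‖z i‖ ≤ c) ∧ c < 1 ∧ 0 ≤ c := by
  haveI : Nonempty (Fin n) := ⟨⟨0, hn⟩⟩
  have hle : ∀ i, ‖z i‖ ≤ Finset.univ.sup' Finset.univ_nonempty fun i => ‖z i‖ :=
    fun i => Finset.le_sup' (f := fun j => ‖z j‖) (Finset.mem_univ i)
  exact ⟨_, hle, (Finset.sup'_lt_iff _).2 fun i _ => hz i,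
    (norm_nonneg (z ⟨0, hn⟩)).trans (hle ⟨0, hn⟩)⟩


set_option maxHeartbeats 1000000
set_option synthInstance.maxHeartbeats 400000

/-- Theorem 2.2 of the paper. Given isometric colligations
`V₁ = [[a₁,B₁],[C₁,D₁]]` on `ℂ ⊕ (H₁ ⊕ ⋯ ⊕ H_m)` and `V₂ = [[a₂,B₂],[C₂,D₂]]` on
`ℂ ⊕ (H_{m+1} ⊕ ⋯ ⊕ Hₙ)` (here the first `m` spaces are `M 0, …, M (m-1)` and the remaining
`n - m = k` spaces are `N 0, …, N (k-1)`, with `1 ≤ m < n`), the block operator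
`V = [[a₁a₂, B₁, a₁B₂],[a₂C₁, D₁, C₁B₂],[C₂, 0, D₂]]` is an isometric colligation, it
satisfies property `F_m(n)` (its `(2,1)` block is `0` and `a D₁₂ = C₁B₂` for its blocks), and
`τ_V(z) = τ_{V₁}(z₁,…,z_m) τ_{V₂}(z_{m+1},…,zₙ)` on the polydisc. -/
theorem isometric_colligation_product_split
    {m k : ℕ} (hm : 1 ≤ m) (hk : 1 ≤ k)
    {M : Fin m → Type*} {N : Fin k → Type*}
    [∀ i, NormedAddCommGroup (M i)] [∀ i, InnerProductSpace ℂ (M i)] [∀ i, CompleteSpace (M i)]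
    [∀ i, NormedAddCommGroup (N i)] [∀ i, InnerProductSpace ℂ (N i)] [∀ i, CompleteSpace (N i)]
    (a₁ a₂ : ℂ)
    (B₁ : PiLp 2 M →L[ℂ] ℂ) (C₁ : ℂ →L[ℂ] PiLp 2 M) (D₁ : PiLp 2 M →L[ℂ] PiLp 2 M)
    (B₂ : PiLp 2 N →L[ℂ] ℂ) (C₂ : ℂ →L[ℂ] PiLp 2 N) (D₂ : PiLp 2 N →L[ℂ] PiLp 2 N)
    (hV₁ : IsIsometricColligation a₁ B₁ C₁ D₁)
    (hV₂ : IsIsometricColligation a₂ B₂ C₂ D₂) :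
    IsIsometricColligation (a₁ * a₂) (rowB B₁ (a₁ • B₂)) (colC (a₂ • C₁) C₂)
        (blockD D₁ (C₁ ∘L B₂) 0 D₂) ∧
      (a₁ * a₂) • (C₁ ∘L B₂) = (a₂ • C₁) ∘L (a₁ • B₂) ∧
      ∀ z₁ ∈ polyDisc m, ∀ z₂ ∈ polyDisc k,
        transferSplit (M := M) (N := N) (a₁ * a₂) (rowB B₁ (a₁ • B₂)) (colC (a₂ • C₁) C₂)
            (blockD D₁ (C₁ ∘L B₂) 0 D₂) z₁ z₂ =
          transferN a₁ B₁ C₁ D₁ z₁ * transferN a₂ B₂ C₂ D₂ z₂ := by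
  have hIso : IsIsometricColligation (a₁ * a₂) (rowB B₁ (a₁ • B₂)) (colC (a₂ • C₁) C₂)
      (blockD D₁ (C₁ ∘L B₂) 0 D₂) := by
    intro z w h k
    have h1 := hV₁ (a₂ * z + B₂ h.snd) (a₂ * w + B₂ k.snd) h.fst k.fst
    have h2 := hV₂ z w h.snd k.snd
    have eC : ∀ (u : ℂ) (v : PiLp 2 N), a₂ • C₁ u + (D₁ (h.fst) + C₁ (B₂ v)) =
        C₁ (a₂ * u + B₂ v) + D₁ h.fst := by
      intro u v
      rw [map_add, ← smul_eq_mul, map_smul]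
      abel
    have eC' : ∀ (u : ℂ) (v : PiLp 2 N), a₂ • C₁ u + (D₁ (k.fst) + C₁ (B₂ v)) =
        C₁ (a₂ * u + B₂ v) + D₁ k.fst := by
      intro u v
      rw [map_add, ← smul_eq_mul, map_smul]
      abel
    have eB : ∀ (u : ℂ) (x : PiLp 2 M) (v : PiLp 2 N),
        a₁ * a₂ * u + (B₁ x + a₁ • B₂ v) = a₁ * (a₂ * u + B₂ v) + B₁ x := by
      intro u x v; simp only [smul_eq_mul]; ring
    simp only [rowB, colC, blockD, ContinuousLinearMap.comp_apply,
      ContinuousLinearMap.add_apply, ContinuousLinearMap.coe_comp', Function.comp_apply,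
      ContinuousLinearMap.smul_apply, ContinuousLinearMap.prod_apply,
      ContinuousLinearMap.coe_fst', ContinuousLinearMap.coe_snd',
      ContinuousLinearEquiv.coe_coe, WithLp.prod_inner_apply, ContinuousLinearMap.zero_apply,
      ContinuousLinearMap.zero_comp, zero_add, add_zero,
      WithLp.prodContinuousLinearEquiv_apply, WithLp.prodContinuousLinearEquiv_symm_apply,
      WithLp.ofLp_fst, WithLp.ofLp_snd, WithLp.toLp_fst, WithLp.toLp_snd,
      myfst', mysnd']
    rw [eC, eC', eB, eB]
    linear_combination h1 + h2
  refine ⟨hIso, ?_, ?_⟩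
  · ext x
    simp only [ContinuousLinearMap.smul_apply, ContinuousLinearMap.comp_apply,
      smul_eq_mul, ← map_smul, smul_eq_mul]
    have e : a₁ * a₂ * B₂ x = a₂ * (a₁ * B₂ x) := by ring
    rw [e]
  · intro z₁ hz₁ z₂ hz₂
    haveI : Nonempty (Fin m) := ⟨⟨0, hm⟩⟩
    haveI : Nonempty (Fin k) := ⟨⟨0, hk⟩⟩
    haveI : CompleteSpace (PiLp 2 M) := inferInstance
    haveI : CompleteSpace (PiLp 2 N) := inferInstance
    set E₁ := diagN (K := M) z₁ with hE₁def
    set E₂ := diagN (K := N) z₂ with hE₂def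
    obtain ⟨c₁, hc₁le, hc₁1, hc₁0⟩ := exists_poly_bound hm z₁ hz₁
    obtain ⟨c₂, hc₂le, hc₂1, hc₂0⟩ := exists_poly_bound hk z₂ hz₂
    set c := max c₁ c₂ with hcdef
    have hc1 : c < 1 := max_lt hc₁1 hc₂1
    have hc0 : 0 ≤ c := le_max_of_le_left hc₁0
    have hD₁ := colligation_D_contraction hV₁
    have hD₂ := colligation_D_contraction hV₂
    have hD := colligation_D_contraction hIso
    have hU₁ : IsUnit (1 - E₁.comp D₁) :=
      isUnit_one_sub_comp hc₁1 hc₁0 (diagN_bound z₁ hc₁le hc₁0) hD₁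
    have hU₂ : IsUnit (1 - E₂.comp D₂) :=
      isUnit_one_sub_comp hc₂1 hc₂0 (diagN_bound z₂ hc₂le hc₂0) hD₂
    have hU : IsUnit (1 - (blockD E₁ 0 0 E₂).comp (blockD D₁ (C₁ ∘L B₂) 0 D₂)) :=
      isUnit_one_sub_comp hc1 hc0
        (blockDiag_bound E₁ E₂ hc0
          (diagN_bound z₁ (fun i => (hc₁le i).trans (le_max_left _ _)) hc0)
          (diagN_bound z₂ (fun i => (hc₂le i).trans (le_max_right _ _)) hc0)) hD
    set u₁ := Ring.inverse (1 - E₁.comp D₁) (E₁ (C₁ 1)) with hu₁def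
    set u₂ := Ring.inverse (1 - E₂.comp D₂) (E₂ (C₂ 1)) with hu₂def
    have hu₁ : u₁ - E₁ (D₁ u₁) = E₁ (C₁ 1) := by
      have h0 : ((1 - E₁.comp D₁) * Ring.inverse (1 - E₁.comp D₁)) (E₁ (C₁ 1)) = E₁ (C₁ 1) := by
        rw [Ring.mul_inverse_cancel _ hU₁, ContinuousLinearMap.one_apply]
      simpa [ContinuousLinearMap.mul_apply, ContinuousLinearMap.sub_apply,
        ContinuousLinearMap.comp_apply, ContinuousLinearMap.one_apply] using h0
    have hu₂ : u₂ - E₂ (D₂ u₂) = E₂ (C₂ 1) := by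
      have h0 : ((1 - E₂.comp D₂) * Ring.inverse (1 - E₂.comp D₂)) (E₂ (C₂ 1)) = E₂ (C₂ 1) := by
        rw [Ring.mul_inverse_cancel _ hU₂, ContinuousLinearMap.one_apply]
      simpa [ContinuousLinearMap.mul_apply, ContinuousLinearMap.sub_apply,
        ContinuousLinearMap.comp_apply, ContinuousLinearMap.one_apply] using h0
    set w : WithLp 2 (PiLp 2 M × PiLp 2 N) :=
      (WithLp.equiv 2 _).symm ((a₂ + B₂ u₂) • u₁, u₂) with hwdef
    have hw1 : w.fst = (a₂ + B₂ u₂) • u₁ := rfl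
    have hw2 : w.snd = u₂ := rfl
    have hC : C₁ (B₂ u₂) = (B₂ u₂) • C₁ 1 := by
      rw [← map_smul, smul_eq_mul, mul_one]
    have hw : (1 - (blockD E₁ 0 0 E₂).comp (blockD D₁ (C₁ ∘L B₂) 0 D₂)) w =
        blockD E₁ 0 0 E₂ (colC (a₂ • C₁) C₂ 1) := by
      refine wlp_ext ?_ ?_
      · rw [ContinuousLinearMap.sub_apply, ContinuousLinearMap.one_apply,
          ContinuousLinearMap.comp_apply, wlp_sub_fst, blockDiag_fst, blockD_fst,
          blockDiag_fst, colC_fst, hw1, hw2,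
          ContinuousLinearMap.comp_apply, hC, ContinuousLinearMap.smul_apply]
        simp only [map_add, map_smul]
        rw [← hu₁]
        module
      · rw [ContinuousLinearMap.sub_apply, ContinuousLinearMap.one_apply,
          ContinuousLinearMap.comp_apply, wlp_sub_snd, blockDiag_snd, blockD_snd,
          blockDiag_snd, colC_snd, hw1, hw2]
        simp only [ContinuousLinearMap.zero_apply, zero_add, map_add]
        rw [← hu₂]
    have hinv := ring_inverse_apply_eq hU hw
    simp only [transferSplit, transferN, ← hE₁def, ← hE₂def, ← hu₁def, ← hu₂def, hinv,
      rowB_apply, hw1, hw2, map_smul, smul_eq_mul, ContinuousLinearMap.smul_apply]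
    ring
end
end

section
/- Let H₁ and H₂ be complex Hilbert spaces and let V = [[0, B₁, 0],[C₁, D₁, D₂],[C₂, 0, D₄]] be an isometric colligation on ℂ ⊕ (H₁ ⊕ H₂). Then for every z ∈ 𝔻, τ_V(z) = (zB₁(I − zD₁)^{-1}) ∘ (C₁ + zD₂(I − zD₄)^{-1}C₂), the composition of the operator C₁ + zD₂(I − zD₄)^{-1}C₂ : ℂ → H₁ followed by the operator zB₁(I − zD₁)^{-1} : H₁ → ℂ. -/
open ContinuousLinearMap Metric

noncomputable section

variable {H : Type*} [NormedAddCommGroup H] [InnerProductSpace ℂ H]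

set_option maxHeartbeats 1000000
set_option synthInstance.maxHeartbeats 400000

/-- formula (5.2) of the paper. For an isometric colligation
`V = [[0, B₁, 0],[C₁, D₁, D₂],[C₂, 0, D₄]]` on `ℂ ⊕ (H₁ ⊕ H₂)` and `z ∈ 𝔻`,
`τ_V(z) = (zB₁(I − zD₁)⁻¹) ∘ (C₁ + zD₂(I − zD₄)⁻¹C₂)`, the composition (evaluated at
`1 ∈ ℂ`) of `C₁ + zD₂(I − zD₄)⁻¹C₂ : ℂ → H₁` followed by `zB₁(I − zD₁)⁻¹ : H₁ → ℂ`. -/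
theorem transfer_triangular_factorization
    {H₁ H₂ : Type*}
    [NormedAddCommGroup H₁] [InnerProductSpace ℂ H₁] [CompleteSpace H₁]
    [NormedAddCommGroup H₂] [InnerProductSpace ℂ H₂] [CompleteSpace H₂]
    (B₁ : H₁ →L[ℂ] ℂ) (C₁ : ℂ →L[ℂ] H₁) (C₂ : ℂ →L[ℂ] H₂)
    (D₁ : H₁ →L[ℂ] H₁) (D₂ : H₂ →L[ℂ] H₁) (D₄ : H₂ →L[ℂ] H₂)
    (hV : IsIsometricColligation 0 (rowB B₁ 0) (colC C₁ C₂) (blockD D₁ D₂ 0 D₄)) :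
    ∀ z ∈ ball (0 : ℂ) 1,
      transfer1 0 (rowB B₁ 0) (colC C₁ C₂) (blockD D₁ D₂ 0 D₄) z =
        z * B₁ (Ring.inverse (1 - z • D₁)
          (C₁ 1 + z • D₂ (Ring.inverse (1 - z • D₄) (C₂ 1)))) := by
  intro z hz
  have hz1 : ‖z‖ < 1 := by simpa using hz
  set E := WithLp.prodContinuousLinearEquiv 2 ℂ H₁ H₂ with hE
  set D : WithLp 2 (H₁ × H₂) →L[ℂ] WithLp 2 (H₁ × H₂) := blockD D₁ D₂ 0 D₄ with hDdef
  -- D is a contraction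
  have hDnorm : ∀ x : WithLp 2 (H₁ × H₂), ‖D x‖ ≤ ‖x‖ := by
    intro x
    have h := hV 0 0 x x
    simp only [zero_mul, zero_add, map_zero, mul_zero] at h
    rw [inner_self_eq_norm_sq_to_K (𝕜 := ℂ), inner_self_eq_norm_sq_to_K (𝕜 := ℂ), RCLike.conj_mul] at h
    have h' : ‖rowB B₁ (0 : H₂ →L[ℂ] ℂ) x‖ ^ 2 + ‖D x‖ ^ 2 = ‖x‖ ^ 2 := by
      exact_mod_cast h
    nlinarith [norm_nonneg (D x), norm_nonneg x, sq_nonneg (‖D x‖ + ‖x‖)]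
  -- D₁ and D₄ are contractions
  have happ : ∀ (a : H₁) (b : H₂),
      D (E.symm (a, b)) = E.symm (D₁ a + D₂ b, D₄ b) := by
    intro a b
    show E.symm (D₁ a + D₂ b, (0 : H₁ →L[ℂ] H₂) a + D₄ b) = _
    simp
  have hsq : ∀ (a : H₁) (b : H₂), ‖E.symm (a, b)‖ ^ 2 = ‖a‖ ^ 2 + ‖b‖ ^ 2 := by
    intro a b
    exact WithLp.prod_norm_sq_eq_of_L2 (E.symm (a, b))
  have hD1 : ∀ v : H₁, ‖D₁ v‖ ≤ ‖v‖ := by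
    intro v
    have h1 := hDnorm (E.symm (v, 0))
    rw [happ v 0] at h1
    have h2 := hsq (D₁ v + D₂ 0) (D₄ 0)
    have h3 := hsq v 0
    simp only [map_zero, add_zero, norm_zero, zero_pow, ne_eq, OfNat.ofNat_ne_zero,
      not_false_eq_true] at h2 h3 h1
    have h4 := pow_le_pow_left₀ (norm_nonneg _) h1 2
    nlinarith [norm_nonneg (D₁ v), norm_nonneg v, sq_nonneg (‖D₁ v‖ + ‖v‖)]
  have hD4 : ∀ v : H₂, ‖D₄ v‖ ≤ ‖v‖ := by
    intro v
    have h1 := hDnorm (E.symm (0, v))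
    rw [happ 0 v] at h1
    have h2 := hsq (D₁ 0 + D₂ v) (D₄ v)
    have h3 := hsq 0 v
    simp only [map_zero, zero_add, norm_zero, zero_pow, ne_eq, OfNat.ofNat_ne_zero,
      not_false_eq_true] at h2 h3 h1
    have h4 := pow_le_pow_left₀ (norm_nonneg _) h1 2
    nlinarith [norm_nonneg (D₄ v), norm_nonneg v, norm_nonneg (D₂ v),
      sq_nonneg (‖D₄ v‖ + ‖v‖)]
  -- units
  have hltD : ‖z • D‖ < 1 :=
    calc ‖z • D‖ = ‖z‖ * ‖D‖ := norm_smul z D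
      _ ≤ ‖z‖ * 1 := by
          gcongr
          exact ContinuousLinearMap.opNorm_le_bound D zero_le_one (fun v => by
            simpa using hDnorm v)
      _ < 1 := by simpa using hz1
  have hltD1 : ‖z • D₁‖ < 1 :=
    calc ‖z • D₁‖ = ‖z‖ * ‖D₁‖ := norm_smul z D₁
      _ ≤ ‖z‖ * 1 := by
          gcongr
          exact ContinuousLinearMap.opNorm_le_bound D₁ zero_le_one (fun v => by
            simpa using hD1 v)
      _ < 1 := by simpa using hz1
  have hltD4 : ‖z • D₄‖ < 1 :=
    calc ‖z • D₄‖ = ‖z‖ * ‖D₄‖ := norm_smul z D₄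
      _ ≤ ‖z‖ * 1 := by
          gcongr
          exact ContinuousLinearMap.opNorm_le_bound D₄ zero_le_one (fun v => by
            simpa using hD4 v)
      _ < 1 := by simpa using hz1
  have hUD : IsUnit (1 - z • D) := by
    have h := (Units.oneSub (z • D) hltD).isUnit
    rwa [Units.val_oneSub] at h
  have hU1 : IsUnit (1 - z • D₁) := by
    have h := (Units.oneSub (z • D₁) hltD1).isUnit
    rwa [Units.val_oneSub] at h
  have hU4 : IsUnit (1 - z • D₄) := by
    have h := (Units.oneSub (z • D₄) hltD4).isUnit
    rwa [Units.val_oneSub] at h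
  set x₂ : H₂ := Ring.inverse (1 - z • D₄) (C₂ 1) with hx₂
  set x₁ : H₁ := Ring.inverse (1 - z • D₁) (C₁ 1 + z • D₂ x₂) with hx₁
  have e4 : (1 - z • D₄) x₂ = C₂ 1 := by
    have h := congrArg (fun T : H₂ →L[ℂ] H₂ => T (C₂ 1)) (Ring.mul_inverse_cancel _ hU4)
    simp only [ContinuousLinearMap.mul_apply, ContinuousLinearMap.one_apply] at h
    exact h
  have e1 : (1 - z • D₁) x₁ = C₁ 1 + z • D₂ x₂ := by
    have h := congrArg (fun T : H₁ →L[ℂ] H₁ => T (C₁ 1 + z • D₂ x₂))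
      (Ring.mul_inverse_cancel _ hU1)
    simp only [ContinuousLinearMap.mul_apply, ContinuousLinearMap.one_apply] at h
    exact h
  set X : WithLp 2 (H₁ × H₂) := E.symm (x₁, x₂) with hX
  have hsolve : (1 - z • D) X = colC C₁ C₂ 1 := by
    have hc : colC C₁ C₂ 1 = E.symm (C₁ 1, C₂ 1) := rfl
    have h1 : (1 - z • D) X = X - z • D X := by
      simp [ContinuousLinearMap.sub_apply, ContinuousLinearMap.smul_apply]
    rw [h1, hX, happ, hc, ← map_smul, ← map_sub]
    congr 1
    have hx1' : x₁ - z • (D₁ x₁ + D₂ x₂) = C₁ 1 := by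
      have := e1
      simp only [ContinuousLinearMap.sub_apply, ContinuousLinearMap.smul_apply,
        ContinuousLinearMap.one_apply] at this
      rw [smul_add]
      rw [sub_add_eq_sub_sub, this]
      abel
    have hx2' : x₂ - z • D₄ x₂ = C₂ 1 := by
      have := e4
      simpa [ContinuousLinearMap.sub_apply, ContinuousLinearMap.smul_apply,
        ContinuousLinearMap.one_apply] using this
    exact Prod.ext hx1' hx2'
  have hinv : Ring.inverse (1 - z • D) (colC C₁ C₂ 1) = X := by
    have h := congrArg (fun T : WithLp 2 (H₁ × H₂) →L[ℂ] WithLp 2 (H₁ × H₂) => T X)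
      (Ring.inverse_mul_cancel _ hUD)
    simp only [ContinuousLinearMap.mul_apply, ContinuousLinearMap.one_apply] at h
    rw [hsolve] at h
    exact h
  have hrow : rowB B₁ (0 : H₂ →L[ℂ] ℂ) X = B₁ x₁ := by
    show B₁ x₁ + (0 : H₂ →L[ℂ] ℂ) x₂ = B₁ x₁
    simp
  rw [transfer1, hinv, hrow, zero_add]
end
end

section
/- Let H₁ and H₂ be complex Hilbert spaces and let V = [[0, B₁, 0],[C₁, D₁, D₂],[C₂, 0, D₄]] be an isometric colligation on ℂ ⊕ (H₁ ⊕ H₂) such that C₁C₁*D₂ = (C₁*C₁)D₂ and C₁*C₁ > 0. Let x be a non-zero complex number with |x|² = C₁*C₁. Then V₁ = [[0, B₁],[(1/x)C₁, D₁]] is an isometric colligation on ℂ ⊕ H₁, V₂ = [[x, (1/x̄)C₁*D₂],[C₂, D₄]] is an isometric colligation on ℂ ⊕ H₂, and τ_V(z) = τ_{V₁}(z) · τ_{V₂}(z) for all z ∈ 𝔻. -/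
open ContinuousLinearMap Metric

noncomputable section

variable {H : Type*} [NormedAddCommGroup H] [InnerProductSpace ℂ H]

set_option maxHeartbeats 1000000

private lemma inv_facts' {E : Type*} [NormedAddCommGroup E] [NormedSpace ℂ E] [CompleteSpace E]
    {z : ℂ} (hz : ‖z‖ < 1) {T : E →L[ℂ] E} (hT : ∀ v, ‖T v‖ ≤ ‖v‖) :
    (∀ v, Ring.inverse (1 - z • T) ((1 - z • T) v) = v) ∧
      ∀ v, (1 - z • T) (Ring.inverse (1 - z • T) v) = v := by
  have hTn : ‖T‖ ≤ 1 := T.opNorm_le_bound zero_le_one (by simpa using hT)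
  have hn : ‖z • T‖ < 1 := by
    calc ‖z • T‖ ≤ ‖z‖ * ‖T‖ := norm_smul_le z T
      _ ≤ ‖z‖ * 1 := mul_le_mul_of_nonneg_left hTn (norm_nonneg z)
      _ = ‖z‖ := mul_one _
      _ < 1 := hz
  have hu : IsUnit ((1 : E →L[ℂ] E) - z • T) := by
    have := (Units.oneSub (z • T) hn).isUnit
    rwa [Units.val_oneSub] at this
  refine ⟨fun v => ?_, fun v => ?_⟩
  · rw [← ContinuousLinearMap.mul_apply, Ring.inverse_mul_cancel _ hu,
      ContinuousLinearMap.one_apply]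
  · rw [← ContinuousLinearMap.mul_apply, Ring.mul_inverse_cancel _ hu,
      ContinuousLinearMap.one_apply]
/-- Case (i) in Section 4 of the paper, converse direction. Let
`V = [[0, B₁, 0],[C₁, D₁, D₂],[C₂, 0, D₄]]` be an isometric colligation on `ℂ ⊕ (H₁ ⊕ H₂)`
with `C₁C₁*D₂ = (C₁*C₁)D₂` and `C₁*C₁ > 0`, and let `x ≠ 0` with `|x|² = C₁*C₁`. Then
`V₁ = [[0, B₁],[(1/x)C₁, D₁]]` and `V₂ = [[x, (1/x̄)C₁*D₂],[C₂, D₄]]` are isometric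
colligations and `τ_V = τ_{V₁} τ_{V₂}` on `𝔻`. -/
theorem vanishing_colligation_factors
    {H₁ H₂ : Type*}
    [NormedAddCommGroup H₁] [InnerProductSpace ℂ H₁] [CompleteSpace H₁]
    [NormedAddCommGroup H₂] [InnerProductSpace ℂ H₂] [CompleteSpace H₂]
    (B₁ : H₁ →L[ℂ] ℂ) (C₁ : ℂ →L[ℂ] H₁) (C₂ : ℂ →L[ℂ] H₂)
    (D₁ : H₁ →L[ℂ] H₁) (D₂ : H₂ →L[ℂ] H₁) (D₄ : H₂ →L[ℂ] H₂)
    (hV : IsIsometricColligation 0 (rowB B₁ 0) (colC C₁ C₂) (blockD D₁ D₂ 0 D₄))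
    (hcond : C₁ ∘L ((ContinuousLinearMap.adjoint C₁) ∘L D₂) = ((‖C₁ 1‖ : ℂ) ^ 2) • D₂)
    (hpos : (0 : ℝ) < ‖C₁ 1‖ ^ 2)
    (x : ℂ) (hx : x ≠ 0) (hx2 : ‖x‖ ^ 2 = ‖C₁ 1‖ ^ 2) :
    IsIsometricColligation 0 B₁ (x⁻¹ • C₁) D₁ ∧
      IsIsometricColligation x (((starRingEnd ℂ) x)⁻¹ • ((ContinuousLinearMap.adjoint C₁) ∘L D₂))
        C₂ D₄ ∧
      ∀ z ∈ ball (0 : ℂ) 1,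
        transfer1 0 (rowB B₁ 0) (colC C₁ C₂) (blockD D₁ D₂ 0 D₄) z =
          transfer1 0 B₁ (x⁻¹ • C₁) D₁ z *
            transfer1 x (((starRingEnd ℂ) x)⁻¹ •
              ((ContinuousLinearMap.adjoint C₁) ∘L D₂)) C₂ D₄ z := by
  classical
  set e := WithLp.prodContinuousLinearEquiv 2 ℂ H₁ H₂ with he
  have hV' : ∀ (z w : ℂ) (h₁ k₁ : H₁) (h₂ k₂ : H₂),
      (starRingEnd ℂ) (B₁ h₁) * (B₁ k₁)
        + (inner ℂ (C₁ z + (D₁ h₁ + D₂ h₂)) (C₁ w + (D₁ k₁ + D₂ k₂)) : ℂ)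
        + (inner ℂ (C₂ z + D₄ h₂) (C₂ w + D₄ k₂) : ℂ)
      = (starRingEnd ℂ) z * w + ((inner ℂ h₁ k₁ : ℂ) + (inner ℂ h₂ k₂ : ℂ)) := by
    intro z w h₁ k₁ h₂ k₂
    have := hV z w (e.symm (h₁, h₂)) (e.symm (k₁, k₂))
    have e1 : (e.symm (h₁, h₂)).fst = h₁ := rfl
    have e2 : (e.symm (h₁, h₂)).snd = h₂ := rfl
    have e3 : (e.symm (k₁, k₂)).fst = k₁ := rfl
    have e4 : (e.symm (k₁, k₂)).snd = k₂ := rfl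
    simp [rowB, colC, blockD, WithLp.prod_inner_apply, e1, e2, e3, e4, inner_add_left,
      inner_add_right] at this ⊢
    linear_combination this
  -- basic scalar facts
  have hcne : ((‖C₁ 1‖ : ℂ)) ^ 2 ≠ 0 := by
    have h : ((‖C₁ 1‖ : ℂ)) ^ 2 = ((‖C₁ 1‖ ^ 2 : ℝ) : ℂ) := by push_cast; ring
    rw [h]
    exact_mod_cast hpos.ne'
  have hxbar : (starRingEnd ℂ) x ≠ 0 := by simpa using hx
  have hxc : x * (starRingEnd ℂ) x = ((‖C₁ 1‖ : ℂ)) ^ 2 := by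
    rw [Complex.mul_conj, Complex.normSq_eq_norm_sq, hx2]
    push_cast; ring
  have hC1s : ∀ c : ℂ, C₁ c = c • C₁ 1 := by
    intro c; rw [← map_smul, smul_eq_mul, mul_one]
  have hC2s : ∀ c : ℂ, C₂ c = c • C₂ 1 := by
    intro c; rw [← map_smul, smul_eq_mul, mul_one]
  have hadj : ∀ y : H₁, (ContinuousLinearMap.adjoint C₁) y = (inner ℂ (C₁ 1) y : ℂ) := by
    intro y
    have h := ContinuousLinearMap.adjoint_inner_left C₁ (1 : ℂ) y
    rw [RCLike.inner_apply, one_mul] at h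
    calc (ContinuousLinearMap.adjoint C₁) y
        = (starRingEnd ℂ) ((starRingEnd ℂ) ((ContinuousLinearMap.adjoint C₁) y)) := by
          rw [Complex.conj_conj]
      _ = (starRingEnd ℂ) (inner ℂ y (C₁ 1) : ℂ) := by rw [h]
      _ = (inner ℂ (C₁ 1) y : ℂ) := inner_conj_symm _ _
  have hcc : (inner ℂ (C₁ 1) (C₁ 1) : ℂ) = x * (starRingEnd ℂ) x := by
    rw [hxc]
    have := inner_self_eq_norm_sq_to_K (𝕜 := ℂ) (C₁ 1)
    simpa using this
  have t11 : ∀ z w : ℂ, (inner ℂ (C₁ z) (C₁ w) : ℂ)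
      = (starRingEnd ℂ) z * w * (x * (starRingEnd ℂ) x) := by
    intro z w
    rw [hC1s z, hC1s w, inner_smul_left, inner_smul_right, hcc]; ring
  have t12 : ∀ (z : ℂ) (k : H₂), (inner ℂ (C₁ z) (D₂ k) : ℂ)
      = (starRingEnd ℂ) z * (inner ℂ (C₁ 1) (D₂ k) : ℂ) := by
    intro z k; rw [hC1s z, inner_smul_left]
  have t21 : ∀ (h : H₂) (w : ℂ), (inner ℂ (D₂ h) (C₁ w) : ℂ)
      = (starRingEnd ℂ) ((inner ℂ (C₁ 1) (D₂ h) : ℂ)) * w := by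
    intro h w
    rw [hC1s w, inner_smul_right, ← inner_conj_symm]; ring
  -- consequence of hcond
  have hD2v : ∀ h : H₂, (x * (starRingEnd ℂ) x) • D₂ h = (inner ℂ (C₁ 1) (D₂ h) : ℂ) • C₁ 1 := by
    intro h
    have h1 := DFunLike.congr_fun hcond h
    simp only [ContinuousLinearMap.comp_apply, ContinuousLinearMap.smul_apply] at h1
    rw [hadj, hC1s] at h1
    rw [hxc]
    exact h1.symm
  have t22 : ∀ h k : H₂, (inner ℂ (D₂ h) (D₂ k) : ℂ)
      = (starRingEnd ℂ) ((inner ℂ (C₁ 1) (D₂ h) : ℂ)) * (inner ℂ (C₁ 1) (D₂ k) : ℂ)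
        * (x * (starRingEnd ℂ) x)⁻¹ := by
    intro h k
    have h1 : (inner ℂ ((x * (starRingEnd ℂ) x) • D₂ h) ((x * (starRingEnd ℂ) x) • D₂ k) : ℂ)
        = (inner ℂ ((inner ℂ (C₁ 1) (D₂ h) : ℂ) • C₁ 1) ((inner ℂ (C₁ 1) (D₂ k) : ℂ) • C₁ 1) : ℂ) := by
      rw [hD2v h, hD2v k]
    rw [inner_smul_left, inner_smul_right, inner_smul_left, inner_smul_right, hcc] at h1
    have hconj : (starRingEnd ℂ) (x * (starRingEnd ℂ) x) = x * (starRingEnd ℂ) x := by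
      rw [map_mul, Complex.conj_conj]; ring
    rw [hconj] at h1
    have hne : x * (starRingEnd ℂ) x ≠ 0 := by rw [hxc]; exact hcne
    apply mul_left_cancel₀ hne
    apply mul_left_cancel₀ hne
    rw [h1]
    field_simp
  -- scalar relations from hV'
  have R2 : ∀ h k : H₁, (starRingEnd ℂ) (B₁ h) * (B₁ k) + (inner ℂ (D₁ h) (D₁ k) : ℂ)
      = (inner ℂ h k : ℂ) := by
    intro h k
    have := hV' 0 0 h k 0 0
    simpa using this
  have R4 : ∀ (z : ℂ) (k : H₁), (inner ℂ (C₁ z) (D₁ k) : ℂ) = 0 := by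
    intro z k
    have := hV' z 0 0 k 0 0
    simpa [inner_add_left, inner_add_right] using this
  have R4' : ∀ (h : H₁) (w : ℂ), (inner ℂ (D₁ h) (C₁ w) : ℂ) = 0 := by
    intro h w
    rw [← inner_conj_symm, R4 w h, map_zero]
  have RB : ∀ (z w : ℂ) (h k : H₂),
      (inner ℂ (C₁ z + D₂ h) (C₁ w + D₂ k) : ℂ) + (inner ℂ (C₂ z + D₄ h) (C₂ w + D₄ k) : ℂ)
      = (starRingEnd ℂ) z * w + (inner ℂ h k : ℂ) := by
    intro z w h k
    have := hV' z w 0 0 h k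
    simpa using this
  have hne : x * (starRingEnd ℂ) x ≠ 0 := by rw [hxc]; exact hcne
  refine ⟨?_, ?_, ?_⟩
  · -- V₁ isometric
    intro z w h k
    simp only [zero_mul, zero_add, ContinuousLinearMap.smul_apply]
    rw [inner_add_left, inner_add_right, inner_add_right]
    rw [inner_smul_left, inner_smul_right, inner_smul_left, inner_smul_right]
    rw [t11, R4, R4']
    have h2 := R2 h k
    simp only [map_inv₀]
    field_simp
    linear_combination (x * (starRingEnd ℂ) x) * h2
  · -- V₂ isometric
    intro z w h k
    simp only [ContinuousLinearMap.smul_apply, ContinuousLinearMap.comp_apply, smul_eq_mul]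
    rw [hadj, hadj]
    have hb := RB z w h k
    rw [inner_add_left, inner_add_right, inner_add_right, t11, t12, t21, t22] at hb
    field_simp at hb ⊢
    simp only [map_div₀, map_add, map_mul, Complex.conj_conj]
    field_simp
    linear_combination hb
  · -- transfer functions
    intro z hz
    rw [mem_ball, dist_zero_right] at hz
    -- contraction facts
    have hD1c : ∀ v : H₁, ‖D₁ v‖ ≤ ‖v‖ := by
      intro v
      have h2 := R2 v v
      rw [inner_self_eq_norm_sq_to_K, inner_self_eq_norm_sq_to_K, RCLike.conj_mul] at h2
      have h4 : ‖B₁ v‖ ^ 2 + ‖D₁ v‖ ^ 2 = ‖v‖ ^ 2 := by exact_mod_cast h2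
      nlinarith [norm_nonneg (D₁ v), norm_nonneg v, sq_nonneg ‖B₁ v‖]
    have hD4c : ∀ v : H₂, ‖D₄ v‖ ≤ ‖v‖ := by
      intro v
      have h2 := RB 0 0 v v
      simp only [map_zero, zero_add, zero_mul, mul_zero, map_zero] at h2
      rw [inner_self_eq_norm_sq_to_K, inner_self_eq_norm_sq_to_K,
        inner_self_eq_norm_sq_to_K] at h2
      have h4 : ‖D₂ v‖ ^ 2 + ‖D₄ v‖ ^ 2 = ‖v‖ ^ 2 := by exact_mod_cast h2
      nlinarith [norm_nonneg (D₄ v), norm_nonneg v, sq_nonneg ‖D₂ v‖]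
    have hDc : ∀ v : WithLp 2 (H₁ × H₂), ‖blockD D₁ D₂ 0 D₄ v‖ ≤ ‖v‖ := by
      intro v
      have h2 := hV 0 0 v v
      simp only [mul_zero, zero_mul, zero_add, map_zero, add_zero] at h2
      rw [inner_self_eq_norm_sq_to_K, inner_self_eq_norm_sq_to_K, RCLike.conj_mul] at h2
      have h4 : ‖rowB B₁ 0 v‖ ^ 2 + ‖blockD D₁ D₂ 0 D₄ v‖ ^ 2 = ‖v‖ ^ 2 := by
        exact_mod_cast h2
      nlinarith [norm_nonneg (blockD D₁ D₂ 0 D₄ v), norm_nonneg v, sq_nonneg ‖rowB B₁ 0 v‖]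
    obtain ⟨Hl, Hr⟩ := inv_facts' hz hDc
    obtain ⟨Hl1, Hr1⟩ := inv_facts' hz hD1c
    obtain ⟨Hl4, Hr4⟩ := inv_facts' hz hD4c
    set v₂ := Ring.inverse (1 - z • D₄) (C₂ 1) with hv₂def
    set w₁ := Ring.inverse (1 - z • D₁) (C₁ 1) with hw₁def
    set s := (inner ℂ (C₁ 1) (D₂ v₂) : ℂ) with hsdef
    have hD2vv : D₂ v₂ = ((x * (starRingEnd ℂ) x)⁻¹ * s) • C₁ 1 := by
      have h5 := hD2v v₂
      have h9 : D₂ v₂ = (x * (starRingEnd ℂ) x)⁻¹ • ((x * (starRingEnd ℂ) x) • D₂ v₂) := by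
        rw [smul_smul, inv_mul_cancel₀ hne, one_smul]
      rw [h9, h5, smul_smul, hsdef]
    set v₁ := Ring.inverse (1 - z • D₁) (C₁ 1 + z • D₂ v₂) with hv₁def
    have hv1 : v₁ = w₁ + (z * ((x * (starRingEnd ℂ) x)⁻¹ * s)) • w₁ := by
      rw [hv₁def, map_add, hD2vv, map_smul, map_smul, smul_smul, ← hw₁def]
    have hA4 : (1 - z • D₄) v₂ = C₂ 1 := Hr4 _
    have hA1 : (1 - z • D₁) v₁ = C₁ 1 + z • D₂ v₂ := Hr1 _
    have hA1' : v₁ - z • D₁ v₁ = C₁ 1 + z • D₂ v₂ := by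
      rw [← hA1]; simp [ContinuousLinearMap.sub_apply]
    have hA4' : v₂ - z • D₄ v₂ = C₂ 1 := by
      rw [← hA4]; simp [ContinuousLinearMap.sub_apply]
    have hfst : (e.symm (v₁, v₂)).fst = v₁ := rfl
    have hsnd : (e.symm (v₁, v₂)).snd = v₂ := rfl
    have hAu : (1 - z • blockD D₁ D₂ 0 D₄) (e.symm (v₁, v₂)) = colC C₁ C₂ 1 := by
      have hb : blockD D₁ D₂ 0 D₄ (e.symm (v₁, v₂)) = e.symm (D₁ v₁ + D₂ v₂, D₄ v₂) := by
        simp [blockD, hfst, hsnd]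
        rfl
      rw [ContinuousLinearMap.sub_apply, ContinuousLinearMap.one_apply,
        ContinuousLinearMap.smul_apply, hb, ← map_smul, ← map_sub]
      rw [show colC C₁ C₂ 1 = e.symm (C₁ 1, C₂ 1) from rfl]
      congr 1
      refine Prod.ext ?_ ?_
      · show v₁ - z • (D₁ v₁ + D₂ v₂) = C₁ 1
        rw [smul_add, ← sub_sub, hA1', add_sub_cancel_right]
      · show v₂ - z • D₄ v₂ = C₂ 1
        exact hA4'
    have hinvA : Ring.inverse (1 - z • blockD D₁ D₂ 0 D₄) (colC C₁ C₂ 1) = e.symm (v₁, v₂) := by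
      rw [← hAu, Hl]
    rw [transfer1, transfer1, transfer1, hinvA]
    have hrow : rowB B₁ 0 (e.symm (v₁, v₂)) = B₁ v₁ := by simp [rowB, hfst]
    rw [hrow]
    have hr1 : Ring.inverse (1 - z • D₁) ((x⁻¹ • C₁) 1) = x⁻¹ • w₁ := by
      rw [show (x⁻¹ • C₁) 1 = x⁻¹ • C₁ 1 from rfl, map_smul, hw₁def]
    have hr2 : ((starRingEnd ℂ) x)⁻¹ • ((ContinuousLinearMap.adjoint C₁) ∘L D₂)
        = (((starRingEnd ℂ) x)⁻¹ • ((ContinuousLinearMap.adjoint C₁) ∘L D₂)) := rfl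
    have hr3 : (((starRingEnd ℂ) x)⁻¹ • ((ContinuousLinearMap.adjoint C₁) ∘L D₂))
        (Ring.inverse (1 - z • D₄) (C₂ 1)) = ((starRingEnd ℂ) x)⁻¹ * s := by
      rw [← hv₂def]
      simp only [ContinuousLinearMap.smul_apply, ContinuousLinearMap.comp_apply, smul_eq_mul]
      rw [hadj, hsdef]
    rw [hr1, hr3]
    have hBv1 : B₁ v₁ = B₁ w₁ + (z * ((x * (starRingEnd ℂ) x)⁻¹ * s)) * B₁ w₁ := by
      rw [hv1, map_add, map_smul, smul_eq_mul]
    rw [hBv1, map_smul, smul_eq_mul]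
    field_simp
    ring
end
end
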